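/- arXiv:2502.03092 — 4 statements merged into one kernel-verified Lean document; each statement's English description precedes it below -/
import Mathlib

section
/- Let E be a real inner product space and F : E → ℝ differentiable with gradient ∇F satisfying ‖∇F(x) − ∇F(y)‖² ≤ L·‖x − y‖² for all x, y ∈ E, where L > 0. Let K ≥ 1 be a natural number, η > 0 with 3η²L ≤ 1/(2K), and κ, σ ≥ 0; set δ̇ := 3(κ² + σ²). Let w ∈ E and let w_0 = w, w_{k+1} = w_k − g_k for k = 0,…,K−1, where for each k there is a vector v_k ∈ E (an approximate gradient) with ‖g_k − η·v_k‖² ≤ η²κ² and ‖v_k − ∇F(w_k)‖² ≤ σ². Then for every k with 0 ≤ k ≤ K, ‖w_k − w‖² ≤ e·2^{K+1}·η²·((1 + 2K)·‖∇F(w)‖² + δ̇), where e is Euler's number. -/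
private lemma sq_add2_le_aux (x y : ℝ) : (x + y) ^ 2 ≤ 2 * x ^ 2 + 2 * y ^ 2 := by
  nlinarith [sq_nonneg (x - y)]

private lemma sq_add3_le_aux (x y z : ℝ) : (x + y + z) ^ 2 ≤ 3 * x ^ 2 + 3 * y ^ 2 + 3 * z ^ 2 := by
  nlinarith [sq_nonneg (x - y), sq_nonneg (x - z), sq_nonneg (y - z)]

set_option maxHeartbeats 1000000 in
/-- Client-drift bound from the proof of **Lemma 2 (Bounded Local
Approximation)**: after `k ≤ K` local steps of size `η` from the anchor `w₀`,
the squared drift of the iterate from the anchor is bounded. -/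
theorem client_drift_bound
    {E : Type*} [NormedAddCommGroup E] [InnerProductSpace ℝ E] [CompleteSpace E]
    (F : E → ℝ) (F' : E → E) (hgrad : ∀ x, HasGradientAt F (F' x) x)
    (L : ℝ) (hL : 0 < L)
    (hLip : ∀ x y : E, ‖F' x - F' y‖ ^ 2 ≤ L * ‖x - y‖ ^ 2)
    (K : ℕ) (hK : 1 ≤ K) (η : ℝ) (hη : 0 < η)
    (hstep : 3 * η ^ 2 * L ≤ 1 / (2 * (K : ℝ)))
    (κ σ : ℝ) (hκ : 0 ≤ κ) (hσ : 0 ≤ σ)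
    (δ : ℝ) (hδ : δ = 3 * (κ ^ 2 + σ ^ 2))
    (w₀ : E) (wseq : ℕ → E) (g v : ℕ → E)
    (hw0 : wseq 0 = w₀)
    (hrec : ∀ k < K, wseq (k + 1) = wseq k - g k)
    (hg : ∀ k < K, ‖g k - η • v k‖ ^ 2 ≤ η ^ 2 * κ ^ 2)
    (hv : ∀ k < K, ‖v k - F' (wseq k)‖ ^ 2 ≤ σ ^ 2) :
    ∀ k ≤ K, ‖wseq k - w₀‖ ^ 2 ≤
      Real.exp 1 * 2 ^ (K + 1) * η ^ 2 * ((1 + 2 * (K : ℝ)) * ‖F' w₀‖ ^ 2 + δ) := by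
  have hKr : (1:ℝ) ≤ (K:ℝ) := by exact_mod_cast hK
  have hKpos : (0:ℝ) < (K:ℝ) := by linarith
  set G : ℝ := ‖F' w₀‖ ^ 2 with hGdef
  have hGnn : 0 ≤ G := by positivity
  have hδnn : 0 ≤ δ := by rw [hδ]; positivity
  set C : ℝ := η ^ 2 * (δ + 6 * G) with hCdef
  have hCnn : 0 ≤ C := by positivity
  set r : ℝ := 2 + 2 / (K : ℝ) with hrdef
  clear_value G C r
  have hKinv : 0 < 2 / (K:ℝ) := by positivity
  have hr2 : 2 ≤ r := by rw [hrdef]; linarith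
  have hη2L : 12 * η ^ 2 * L ≤ 2 / (K:ℝ) := by
    have h4 : (2:ℝ) / (K:ℝ) = 4 * (1 / (2 * (K:ℝ))) := by field_simp; ring
    linarith
  have key : ∀ k, k ≤ K → (r - 1) * ‖wseq k - w₀‖ ^ 2 ≤ (r ^ k - 1) * (2 * C) := by
    intro k
    induction k with
    | zero => intro _; simp [hw0]
    | succ k ih =>
      intro hk
      have hkK : k < K := hk
      have ih' := ih (Nat.le_of_lt hkK)
      have ha := hrec k hkK
      have hg' := hg k hkK
      have hv' := hv k hkK
      have hDknn : (0:ℝ) ≤ ‖wseq k - w₀‖ ^ 2 := by positivity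
      -- triangle inequality for the iterate
      have h1 : ‖wseq (k+1) - w₀‖ ≤ ‖wseq k - w₀‖ + ‖g k‖ := by
        rw [ha]
        have := norm_sub_le (wseq k - w₀) (g k)
        calc ‖wseq k - g k - w₀‖ = ‖wseq k - w₀ - g k‖ := by rw [sub_right_comm]
          _ ≤ ‖wseq k - w₀‖ + ‖g k‖ := this
      -- decomposition of g k
      have hdecomp : g k = (g k - η • v k) + η • (v k - F' (wseq k)) + η • F' (wseq k) := by
        rw [smul_sub]; abel
      have h2 : ‖g k‖ ≤ ‖g k - η • v k‖ + ‖η • (v k - F' (wseq k))‖ + ‖η • F' (wseq k)‖ := by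
        calc ‖g k‖ = ‖(g k - η • v k) + η • (v k - F' (wseq k)) + η • F' (wseq k)‖ := by
              rw [← hdecomp]
          _ ≤ _ := norm_add₃_le
      have hs1 : ‖η • (v k - F' (wseq k))‖ = η * ‖v k - F' (wseq k)‖ := by
        rw [norm_smul, Real.norm_eq_abs, abs_of_pos hη]
      have hs2 : ‖η • F' (wseq k)‖ = η * ‖F' (wseq k)‖ := by
        rw [norm_smul, Real.norm_eq_abs, abs_of_pos hη]
      -- gradient bound at wseq k
      have htr : ‖F' (wseq k)‖ ≤ ‖F' (wseq k) - F' w₀‖ + ‖F' w₀‖ := by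
        have := norm_add_le (F' (wseq k) - F' w₀) (F' w₀)
        simpa using this
      have hl := hLip (wseq k) w₀
      have hF : ‖F' (wseq k)‖ ^ 2 ≤ 2 * (L * ‖wseq k - w₀‖ ^ 2) + 2 * G := by
        nlinarith [norm_nonneg (F' (wseq k) - F' w₀), norm_nonneg (F' w₀),
          norm_nonneg (F' (wseq k)), sq_nonneg (‖F' (wseq k) - F' w₀‖ - ‖F' w₀‖)]
      -- squared bound on g k
      have hgk2 : ‖g k‖ ^ 2 ≤ 3 * (η ^ 2 * κ ^ 2) + 3 * (η ^ 2 * σ ^ 2)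
          + 3 * (η ^ 2 * (2 * (L * ‖wseq k - w₀‖ ^ 2) + 2 * G)) := by
        have h2' : ‖g k‖ ≤ ‖g k - η • v k‖ + η * ‖v k - F' (wseq k)‖ + η * ‖F' (wseq k)‖ := by
          rw [← hs1, ← hs2]; exact h2
        set A := ‖g k - η • v k‖ with hA
        set B := ‖v k - F' (wseq k)‖ with hB
        set D := ‖F' (wseq k)‖ with hD
        have hsq : ‖g k‖ ^ 2 ≤ (A + η * B + η * D) ^ 2 :=
          pow_le_pow_left₀ (norm_nonneg _) h2' 2
        have h3 := sq_add3_le_aux A (η * B) (η * D)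
        have hB2 : (η * B) ^ 2 ≤ η ^ 2 * σ ^ 2 := by
          have h := mul_le_mul_of_nonneg_left hv' (by positivity : (0:ℝ) ≤ η ^ 2)
          calc (η * B) ^ 2 = η ^ 2 * B ^ 2 := by ring
            _ ≤ η ^ 2 * σ ^ 2 := h
        have hD2 : (η * D) ^ 2 ≤ η ^ 2 * (2 * (L * ‖wseq k - w₀‖ ^ 2) + 2 * G) := by
          have h := mul_le_mul_of_nonneg_left hF (by positivity : (0:ℝ) ≤ η ^ 2)
          calc (η * D) ^ 2 = η ^ 2 * D ^ 2 := by ring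
            _ ≤ _ := h
        linarith
      -- one-step recursion
      have hstep1 : ‖wseq (k+1) - w₀‖ ^ 2 ≤ r * ‖wseq k - w₀‖ ^ 2 + 2 * C := by
        have hsq2 : ‖wseq (k+1) - w₀‖ ^ 2 ≤ 2 * ‖wseq k - w₀‖ ^ 2 + 2 * ‖g k‖ ^ 2 := by
          have h1' : ‖wseq (k+1) - w₀‖ ^ 2 ≤ (‖wseq k - w₀‖ + ‖g k‖) ^ 2 :=
            pow_le_pow_left₀ (norm_nonneg _) h1 2
          have := sq_add2_le_aux ‖wseq k - w₀‖ ‖g k‖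
          linarith
        have hmulL : 12 * η ^ 2 * L * ‖wseq k - w₀‖ ^ 2 ≤ 2 / (K:ℝ) * ‖wseq k - w₀‖ ^ 2 :=
          mul_le_mul_of_nonneg_right hη2L hDknn
        have hCeq : 2 * C = 2 * η ^ 2 * δ + 12 * η ^ 2 * G := by rw [hCdef]; ring
        have hδη : η ^ 2 * δ = 3 * (η ^ 2 * κ ^ 2) + 3 * (η ^ 2 * σ ^ 2) := by rw [hδ]; ring
        have hrD : r * ‖wseq k - w₀‖ ^ 2
            = 2 * ‖wseq k - w₀‖ ^ 2 + 2 / (K:ℝ) * ‖wseq k - w₀‖ ^ 2 := by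
          rw [hrdef]; ring
        linarith [hgk2]
      calc (r - 1) * ‖wseq (k+1) - w₀‖ ^ 2
          ≤ (r - 1) * (r * ‖wseq k - w₀‖ ^ 2 + 2 * C) := by
            apply mul_le_mul_of_nonneg_left hstep1; linarith
        _ = r * ((r - 1) * ‖wseq k - w₀‖ ^ 2) + (r - 1) * (2 * C) := by ring
        _ ≤ r * ((r ^ k - 1) * (2 * C)) + (r - 1) * (2 * C) := by
            have := mul_le_mul_of_nonneg_left ih' (by linarith : (0:ℝ) ≤ r)
            linarith
        _ = (r ^ (k + 1) - 1) * (2 * C) := by ring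
  -- now conclude
  intro k hk
  have hkey := key k hk
  have hrk : r ^ k ≤ r ^ K := pow_le_pow_right₀ (by linarith) hk
  have hexp : (1 + 1 / (K:ℝ)) ^ K ≤ Real.exp 1 := by
    have h1 : 1 + 1 / (K:ℝ) ≤ Real.exp (1 / (K:ℝ)) := by
      have := Real.add_one_le_exp (1 / (K:ℝ)); linarith
    calc (1 + 1 / (K:ℝ)) ^ K ≤ (Real.exp (1 / (K:ℝ))) ^ K := by
          exact pow_le_pow_left₀ (by positivity) h1 K
      _ = Real.exp ((K:ℝ) * (1 / (K:ℝ))) := (Real.exp_nat_mul _ K).symm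
      _ = Real.exp 1 := by rw [mul_one_div, div_self (ne_of_gt hKpos)]
  have hrK : r ^ K ≤ Real.exp 1 * 2 ^ K := by
    have hre : r = 2 * (1 + 1 / (K:ℝ)) := by rw [hrdef]; field_simp
    rw [hre, mul_pow]
    have h2K : (0:ℝ) ≤ 2 ^ K := by positivity
    calc (2:ℝ) ^ K * (1 + 1 / (K:ℝ)) ^ K ≤ 2 ^ K * Real.exp 1 :=
          mul_le_mul_of_nonneg_left hexp h2K
      _ = Real.exp 1 * 2 ^ K := by ring
  have h2Knn : (0:ℝ) ≤ 2 ^ K := by positivity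
  have hrm1 : (0:ℝ) < r - 1 := by linarith
  -- main chain
  have hchain : (r - 1) * ‖wseq k - w₀‖ ^ 2
      ≤ Real.exp 1 * 2 ^ (K + 1) * (η ^ 2 * (δ + 6 * G)) := by
    calc (r - 1) * ‖wseq k - w₀‖ ^ 2 ≤ (r ^ k - 1) * (2 * C) := hkey
      _ ≤ Real.exp 1 * 2 ^ K * (2 * C) := by
          have h1 : r ^ k - 1 ≤ Real.exp 1 * 2 ^ K := by linarith
          apply mul_le_mul_of_nonneg_right h1; linarith
      _ = Real.exp 1 * 2 ^ (K + 1) * (η ^ 2 * (δ + 6 * G)) := by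
          rw [hCdef]; ring
  -- comparison of constants
  have hineq : δ + 6 * G ≤ (r - 1) * ((1 + 2 * (K:ℝ)) * G + δ) := by
    have key2 : (K:ℝ) * (δ + 6 * G) ≤ ((K:ℝ) + 2) * ((1 + 2 * (K:ℝ)) * G + δ) := by
      nlinarith [hGnn, hδnn, hKr, mul_nonneg hGnn (by nlinarith : (0:ℝ) ≤ 2 * (K:ℝ)^2 - (K:ℝ) + 2)]
    have hre : r - 1 = ((K:ℝ) + 2) / (K:ℝ) := by rw [hrdef]; field_simp; ring
    rw [hre, div_mul_eq_mul_div, le_div_iff₀ hKpos]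
    nlinarith [key2]
  have hfinal : (r - 1) * ‖wseq k - w₀‖ ^ 2
      ≤ (r - 1) * (Real.exp 1 * 2 ^ (K + 1) * η ^ 2 * ((1 + 2 * (K:ℝ)) * G + δ)) := by
    have hmul := mul_le_mul_of_nonneg_left hineq
      (by positivity : (0:ℝ) ≤ Real.exp 1 * 2 ^ (K + 1) * η ^ 2)
    linarith [hchain, hmul]
  exact le_of_mul_le_mul_left hfinal hrm1
end

section
/- Let E be a real inner product space and F : E → ℝ differentiable with gradient ∇F satisfying ‖∇F(x) − ∇F(y)‖² ≤ L·‖x − y‖² for all x, y ∈ E, where L > 0. Let K ≥ 1 be a natural number, η > 0 with 3η²L ≤ 1/(2K), and κ, σ ≥ 0; set δ̇ := 3(κ² + σ²). Let w ∈ E and let w_0 = w, w_{k+1} = w_k − g_k for k = 0,…,K−1, where for each k there is a vector v_k ∈ E with ‖g_k − η·v_k‖² ≤ η²κ² and ‖v_k − ∇F(w_k)‖² ≤ σ². Then for every k with 0 ≤ k ≤ K−1, ‖g_k − η·∇F(w)‖² ≤ 3η⁴·L·e·2^{K+1}·((1 + 2K)·‖∇F(w)‖² + δ̇) + η²·δ̇,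 where e is Euler's number. -/
/-!
Split `g k - η • ∇F(w₀)` into the compression error, the stochastic-gradient error and
`η • (∇F(w_k) - ∇F(w₀))`; the last is controlled by the smoothness constant and the drift
`‖w_k - w₀‖²`. Since `g k` is within that deviation of `η • ∇F(w₀)`, the drift obeys
`D (k + 1) ≤ (2 + 12 η² L) D k + 4 η² (δ + ‖∇F(w₀)‖²)`, so it grows at most geometrically,
and the step-size condition makes the ratio at most `2 (1 + 1/K)`, whose `(K - 1)`-st power
is at most `2 ^ (K - 1) * e`.
-/

open Finset Real

section NormSq

variable {E : Type*}

lemma norm_add_sq_le_two_mul [SeminormedAddGroup E] (a b : E) :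
    ‖a + b‖ ^ 2 ≤ 2 * (‖a‖ ^ 2 + ‖b‖ ^ 2) :=
  (pow_le_pow_left₀ (norm_nonneg _) (norm_add_le a b) 2).trans add_sq_le

lemma norm_add₃_sq_le_three_mul [SeminormedAddGroup E] (a b c : E) :
    ‖a + b + c‖ ^ 2 ≤ 3 * (‖a‖ ^ 2 + ‖b‖ ^ 2 + ‖c‖ ^ 2) := by
  have h := pow_le_pow_left₀ (norm_nonneg _) (norm_add₃_le (a := a) (b := b) (c := c)) 2
  nlinarith [sq_nonneg (‖a‖ - ‖b‖), sq_nonneg (‖a‖ - ‖c‖), sq_nonneg (‖b‖ - ‖c‖)]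

variable [SeminormedAddCommGroup E]

lemma norm_sub_sq_le_of_near (x g c : E) :
    ‖x - g‖ ^ 2 ≤ 2 * ‖x‖ ^ 2 + 4 * ‖g - c‖ ^ 2 + 4 * ‖c‖ ^ 2 := by
  have hx := norm_add_sq_le_two_mul x (-g)
  have hg := norm_add_sq_le_two_mul (g - c) c
  rw [← sub_eq_add_neg, norm_neg] at hx
  rw [sub_add_cancel] at hg
  linarith

variable [NormedSpace ℝ E]

lemma norm_real_smul_sq (η : ℝ) (x : E) : ‖η • x‖ ^ 2 = η ^ 2 * ‖x‖ ^ 2 := by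
  rw [norm_smul, mul_pow, Real.norm_eq_abs, sq_abs]

lemma norm_sub_smul_sq_le_three_mul {g v a b : E} {η α β γ : ℝ}
    (hg : ‖g - η • v‖ ^ 2 ≤ α) (hv : ‖v - a‖ ^ 2 ≤ β) (hab : ‖a - b‖ ^ 2 ≤ γ) :
    ‖g - η • b‖ ^ 2 ≤ 3 * (α + η ^ 2 * β + η ^ 2 * γ) := by
  have hsplit : g - η • b = (g - η • v) + η • (v - a) + η • (a - b) := by
    simp only [smul_sub]; abel
  have hη := sq_nonneg η
  rw [hsplit]
  refine (norm_add₃_sq_le_three_mul _ _ _).trans ?_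
  rw [norm_real_smul_sq, norm_real_smul_sq]
  nlinarith

end NormSq

lemma le_mul_geom_sum_of_le_mul_add {D : ℕ → ℝ} {r C : ℝ} {n : ℕ} (hr : 0 ≤ r)
    (h0 : D 0 ≤ 0) (hstep : ∀ k < n, D (k + 1) ≤ r * D k + C) :
    ∀ k ≤ n, D k ≤ C * ∑ i ∈ range k, r ^ i := by
  intro k hk
  induction k with
  | zero => simpa using h0
  | succ k ih =>
    calc D (k + 1) ≤ r * D k + C := hstep k hk
      _ ≤ r * (C * ∑ i ∈ range k, r ^ i) + C := by gcongr; exact ih (by omega)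
      _ = C * ∑ i ∈ range (k + 1), r ^ i := by rw [geom_sum_succ]; ring

lemma geom_sum_le_pow {r : ℝ} (hr : 2 ≤ r) (n : ℕ) : ∑ i ∈ range n, r ^ i ≤ r ^ n := by
  have h := geom_sum_mul_of_one_le (by linarith : 1 ≤ r) n
  have hS : 0 ≤ ∑ i ∈ range n, r ^ i := sum_nonneg fun i _ => by positivity
  nlinarith

lemma two_add_pow_pred_le_two_pow_mul_exp {a : ℝ} {K : ℕ} (ha : 0 ≤ a) (haK : a ≤ 2 / K) :
    (2 + a) ^ (K - 1) ≤ 2 ^ (K - 1) * exp 1 := by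
  have hbase : 2 + a ≤ 2 * (1 + (K : ℝ)⁻¹) := by
    rw [div_eq_mul_inv] at haK; linarith
  have hone : 1 ≤ 1 + (K : ℝ)⁻¹ := by simp
  calc (2 + a) ^ (K - 1) ≤ (2 * (1 + (K : ℝ)⁻¹)) ^ (K - 1) := by gcongr
    _ = 2 ^ (K - 1) * (1 + (K : ℝ)⁻¹) ^ (K - 1) := mul_pow _ _ _
    _ ≤ 2 ^ (K - 1) * (1 + (K : ℝ)⁻¹) ^ K :=
        mul_le_mul_of_nonneg_left (pow_le_pow_right₀ hone (K.sub_le 1)) (by positivity)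
    _ ≤ 2 ^ (K - 1) * exp 1 := by gcongr; exact one_add_inv_pow_le_exp

lemma le_mul_two_pow_mul_exp_of_le_two_add_mul_add {D : ℕ → ℝ} {a C : ℝ} {K : ℕ}
    (ha : 0 ≤ a) (haK : a ≤ 2 / K) (hC : 0 ≤ C) (h0 : D 0 ≤ 0)
    (hstep : ∀ k < K, D (k + 1) ≤ (2 + a) * D k + C) {k : ℕ} (hk : k < K) :
    D k ≤ C * (2 ^ (K - 1) * exp 1) :=
  calc D k ≤ C * ∑ i ∈ range k, (2 + a) ^ i :=
        le_mul_geom_sum_of_le_mul_add (by positivity) h0 hstep k hk.le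
    _ ≤ C * (2 + a) ^ k := by gcongr; exact geom_sum_le_pow (by linarith) k
    _ ≤ C * (2 ^ (K - 1) * exp 1) := by
        gcongr
        exact (pow_le_pow_right₀ (by linarith) (by omega)).trans
          (two_add_pow_pred_le_two_pow_mul_exp ha haK)

theorem local_approximation_bound_general
    {E : Type*} [NormedAddCommGroup E] [InnerProductSpace ℝ E]
    (F' : E → E)
    (L : ℝ) (hL : 0 < L)
    (hLip : ∀ x y : E, ‖F' x - F' y‖ ^ 2 ≤ L * ‖x - y‖ ^ 2)
    (K : ℕ) (η : ℝ)
    (hstep : 3 * η ^ 2 * L ≤ 1 / (2 * (K : ℝ)))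
    (κ σ : ℝ)
    (δ : ℝ) (hδ : δ = 3 * (κ ^ 2 + σ ^ 2))
    (w₀ : E) (wseq : ℕ → E) (g v : ℕ → E)
    (hw0 : wseq 0 = w₀)
    (hrec : ∀ k < K, wseq (k + 1) = wseq k - g k)
    (hg : ∀ k < K, ‖g k - η • v k‖ ^ 2 ≤ η ^ 2 * κ ^ 2)
    (hv : ∀ k < K, ‖v k - F' (wseq k)‖ ^ 2 ≤ σ ^ 2) :
    ∀ k < K, ‖g k - η • F' w₀‖ ^ 2 ≤
      3 * η ^ 4 * L * Real.exp 1 * 2 ^ (K + 1) * ((1 + 2 * (K : ℝ)) * ‖F' w₀‖ ^ 2 + δ) + η ^ 2 * δ := by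
  intro k hk
  set D : ℕ → ℝ := fun j => ‖wseq j - w₀‖ ^ 2
  set G := ‖F' w₀‖ ^ 2
  set C := 4 * η ^ 2 * (δ + G)
  have hdev (j : ℕ) (hj : j < K) : ‖g j - η • F' w₀‖ ^ 2 ≤ η ^ 2 * δ + 3 * η ^ 2 * L * D j := by
    have := norm_sub_smul_sq_le_three_mul (hg j hj) (hv j hj) (hLip (wseq j) w₀)
    rw [hδ]; linarith
  have hdrift_step (j : ℕ) (hj : j < K) : D (j + 1) ≤ (2 + 12 * η ^ 2 * L) * D j + C := by
    have := norm_sub_sq_le_of_near (wseq j - w₀) (g j) (η • F' w₀)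
    rw [norm_real_smul_sq, sub_right_comm, ← hrec j hj] at this
    linarith [hdev j hj]
  have hδ0 : 0 ≤ δ := by rw [hδ]; positivity
  have hdrift : D k ≤ C * (2 ^ (K - 1) * exp 1) := by
    refine le_mul_two_pow_mul_exp_of_le_two_add_mul_add (by positivity) ?_ (by positivity)
      (by simp [D, hw0]) hdrift_step hk
    rw [show (2 : ℝ) / K = 4 * (1 / (2 * K)) by ring]
    linarith
  have hpow : (2 : ℝ) ^ (K + 1) = 4 * 2 ^ (K - 1) := by
    rw [show K + 1 = K - 1 + 2 by omega, pow_add]; ring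
  calc ‖g k - η • F' w₀‖ ^ 2 ≤ η ^ 2 * δ + 3 * η ^ 2 * L * D k := hdev k hk
    _ ≤ η ^ 2 * δ + 3 * η ^ 2 * L * (C * (2 ^ (K - 1) * exp 1)) := by gcongr
    _ ≤ _ := by
        rw [hpow]
        have : 0 ≤ η ^ 4 * L * exp 1 * 2 ^ (K - 1) * (K * G) := by positivity
        linarith

/-- **Lemma 2 (Bounded Local Approximation)** in deterministic form: each
local update vector `g k` deviates from the scaled global gradient
`η • ∇F(w₀)` at the anchor by at most the stated bound. -/
theorem local_approximation_bound
    {E : Type*} [NormedAddCommGroup E] [InnerProductSpace ℝ E] [CompleteSpace E]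
    (F : E → ℝ) (F' : E → E) (hgrad : ∀ x, HasGradientAt F (F' x) x)
    (L : ℝ) (hL : 0 < L)
    (hLip : ∀ x y : E, ‖F' x - F' y‖ ^ 2 ≤ L * ‖x - y‖ ^ 2)
    (K : ℕ) (hK : 1 ≤ K) (η : ℝ) (hη : 0 < η)
    (hstep : 3 * η ^ 2 * L ≤ 1 / (2 * (K : ℝ)))
    (κ σ : ℝ) (hκ : 0 ≤ κ) (hσ : 0 ≤ σ)
    (δ : ℝ) (hδ : δ = 3 * (κ ^ 2 + σ ^ 2))
    (w₀ : E) (wseq : ℕ → E) (g v : ℕ → E)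
    (hw0 : wseq 0 = w₀)
    (hrec : ∀ k < K, wseq (k + 1) = wseq k - g k)
    (hg : ∀ k < K, ‖g k - η • v k‖ ^ 2 ≤ η ^ 2 * κ ^ 2)
    (hv : ∀ k < K, ‖v k - F' (wseq k)‖ ^ 2 ≤ σ ^ 2) :
    ∀ k < K, ‖g k - η • F' w₀‖ ^ 2 ≤
      3 * η ^ 4 * L * Real.exp 1 * 2 ^ (K + 1) * ((1 + 2 * (K : ℝ)) * ‖F' w₀‖ ^ 2 + δ) + η ^ 2 * δ :=
  local_approximation_bound_general F' L hL hLip K η hstep κ σ δ hδ w₀ wseq g v hw0 hrec hg hv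
end

section
/- Let μ > 0, η̃ > 0 and set q := η̃·μ/2; assume 0 < q < 1. Let n ≥ 1 be a natural number with q·n ≥ 1, let C ≥ 0, and let Δ_0, …, Δ_n and e_0, …, e_{n−1} be nonnegative reals satisfying Δ_{t+1} ≤ (1 − q)·Δ_t − η̃·e_t + C·η̃ for every t < n. Define weights α_t := (1 − q)^{−(t+1)} for t < n. Then (∑_{t<n} α_t·e_t) / (∑_{t<n} α_t) ≤ μ·e^{−q·n}·Δ_0 + C. -/
/-!
Multiplying the recursion at step `t` by `α t = (1 - q)⁻¹ ^ (t + 1)` makes the `Δ`-terms telescope,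
so `ηt * ∑ α t * (e t - C) ≤ Δ 0`. The weights form a geometric series with
`q * ∑ α t = (1 - q)⁻¹ ^ n - 1 ≥ exp (q n) - 1`, and `q n ≥ 1` makes this at least `exp (q n) / 2`;
since `2 q = ηt μ`, dividing by `ηt * ∑ α t` gives the bound.
-/

open Finset

lemma sum_inv_pow_succ_mul_le_of_le_mul_sub {r : ℝ} (hr : 0 < r) {x y : ℕ → ℝ} {n : ℕ}
    (hrec : ∀ t < n, x (t + 1) ≤ r * x t - y t) :
    ∑ t ∈ range n, r⁻¹ ^ (t + 1) * y t ≤ x 0 - r⁻¹ ^ n * x n := by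
  calc ∑ t ∈ range n, r⁻¹ ^ (t + 1) * y t
      ≤ ∑ t ∈ range n, (r⁻¹ ^ t * x t - r⁻¹ ^ (t + 1) * x (t + 1)) := sum_le_sum fun t ht => ?_
    _ = x 0 - r⁻¹ ^ n * x n := by rw [sum_range_sub' fun t => r⁻¹ ^ t * x t, pow_zero, one_mul]
  have hstep := mul_le_mul_of_nonneg_left (hrec t (mem_range.mp ht))
    (pow_nonneg (inv_nonneg.2 hr.le) (t + 1))
  have hcancel : r⁻¹ ^ (t + 1) * r = r⁻¹ ^ t := by
    rw [pow_succ, mul_assoc, inv_mul_cancel₀ hr.ne', mul_one]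
  linear_combination hstep + x t * hcancel

lemma mul_sum_inv_one_sub_pow_succ {q : ℝ} (hq : q ≠ 1) (n : ℕ) :
    q * ∑ t ∈ range n, (1 - q)⁻¹ ^ (t + 1) = (1 - q)⁻¹ ^ n - 1 := by
  have hmul : q * (1 - q)⁻¹ = (1 - q)⁻¹ - 1 := by
    field_simp [sub_ne_zero.2 hq.symm]
    ring
  simp only [pow_succ, ← sum_mul]
  linear_combination (∑ t ∈ range n, (1 - q)⁻¹ ^ t) * hmul + geom_sum_mul (1 - q)⁻¹ n

lemma exp_mul_le_inv_one_sub_pow {q : ℝ} (hq : q < 1) (n : ℕ) :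
    Real.exp (q * n) ≤ (1 - q)⁻¹ ^ n := by
  rw [inv_pow, le_inv_comm₀ (Real.exp_pos _) (pow_pos (sub_pos.2 hq) n)]
  calc (1 - q) ^ n ≤ Real.exp (-q) ^ n :=
        pow_le_pow_left₀ (sub_pos.2 hq).le (Real.one_sub_le_exp_neg q) n
    _ = (Real.exp (q * n))⁻¹ := by rw [← Real.exp_nat_mul, ← Real.exp_neg]; ring_nf

lemma exp_mul_le_two_mul_mul_sum_inv_one_sub_pow_succ {q : ℝ} (hq : q < 1) {n : ℕ}
    (hqn : 1 ≤ q * n) :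
    Real.exp (q * n) ≤ 2 * q * ∑ t ∈ range n, (1 - q)⁻¹ ^ (t + 1) := by
  have htwo : 2 ≤ Real.exp (q * n) := by
    linarith [Real.add_one_le_exp (q * n)]
  rw [mul_assoc, mul_sum_inv_one_sub_pow_succ hq.ne]
  linarith [exp_mul_le_inv_one_sub_pow hq n]

theorem weighted_telescoping_general
    (μ ηt : ℝ) (hηt : 0 < ηt)
    (q : ℝ) (hq : q = ηt * μ / 2) (hq1 : q < 1)
    (n : ℕ) (hqn : 1 ≤ q * n)
    (C : ℝ)
    (Δ e : ℕ → ℝ)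
    (hΔ : ∀ t ≤ n, 0 ≤ Δ t)
    (hrec : ∀ t < n, Δ (t + 1) ≤ (1 - q) * Δ t - ηt * e t + C * ηt)
    (α : ℕ → ℝ) (hα : ∀ t, α t = (1 - q) ^ (-(t + 1 : ℤ))) :
    (∑ t ∈ Finset.range n, α t * e t) / (∑ t ∈ Finset.range n, α t)
      ≤ μ * Real.exp (-(q * n)) * Δ 0 + C := by
  have hα_pow : ∀ t, α t = (1 - q)⁻¹ ^ (t + 1) := fun t => by
    rw [hα, zpow_neg, inv_pow]; norm_cast
  simp only [hα_pow, Real.exp_neg]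
  set S := ∑ t ∈ range n, (1 - q)⁻¹ ^ (t + 1)
  have hn : n ≠ 0 := by rintro rfl; norm_num at hqn
  have hS : 0 < S :=
    sum_pos (fun t _ => pow_pos (inv_pos.2 (sub_pos.2 hq1)) _) (nonempty_range_iff.2 hn)
  have htele := sum_inv_pow_succ_mul_le_of_le_mul_sub (sub_pos.2 hq1)
    (x := Δ) (y := fun t => ηt * (e t - C)) fun t ht => by linarith [hrec t ht]
  simp only [mul_left_comm _ ηt, ← mul_sum, mul_sub, sum_sub_distrib, ← sum_mul] at htele
  have hΔ_n : 0 ≤ (1 - q)⁻¹ ^ n * Δ n :=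
    mul_nonneg (pow_nonneg (inv_nonneg.2 (sub_pos.2 hq1).le) n) (hΔ n le_rfl)
  have hexp : 1 ≤ ηt * μ * S / Real.exp (q * n) := by
    rw [one_le_div (Real.exp_pos _), show ηt * μ = 2 * q by rw [hq]; ring]
    exact exp_mul_le_two_mul_mul_sum_inv_one_sub_pow_succ hq1 hqn
  have hΔ_0 : Δ 0 ≤ ηt * (μ * (Real.exp (q * n))⁻¹ * Δ 0 * S) :=
    calc Δ 0 ≤ Δ 0 * (ηt * μ * S / Real.exp (q * n)) := le_mul_of_one_le_right (hΔ 0 n.zero_le) hexp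
      _ = _ := by ring
  rw [div_le_iff₀ hS]
  refine le_of_mul_le_mul_left ?_ hηt
  linarith

/-- Weighted-telescoping convergence lemma at the core of **Theorem 1**
(strongly convex case). -/
theorem weighted_telescoping
    (μ ηt : ℝ) (hμ : 0 < μ) (hηt : 0 < ηt)
    (q : ℝ) (hq : q = ηt * μ / 2) (hq0 : 0 < q) (hq1 : q < 1)
    (n : ℕ) (hn : 1 ≤ n) (hqn : 1 ≤ q * n)
    (C : ℝ) (hC : 0 ≤ C)
    (Δ e : ℕ → ℝ)
    (hΔ : ∀ t ≤ n, 0 ≤ Δ t) (he : ∀ t < n, 0 ≤ e t)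
    (hrec : ∀ t < n, Δ (t + 1) ≤ (1 - q) * Δ t - ηt * e t + C * ηt)
    (α : ℕ → ℝ) (hα : ∀ t, α t = (1 - q) ^ (-(t + 1 : ℤ))) :
    (∑ t ∈ Finset.range n, α t * e t) / (∑ t ∈ Finset.range n, α t)
      ≤ μ * Real.exp (-(q * n)) * Δ 0 + C :=
  weighted_telescoping_general μ ηt hηt q hq hq1 n hqn C Δ e hΔ hrec α hα
end

section
/- Let E be a real inner product space and F : E → ℝ differentiable with gradient ∇F such that F(y) ≤ F(x) + ⟨∇F(x), y − x⟩ + (L/2)·‖y − x‖² for all x, y ∈ E, where L > 0. Let N ≥ 1 and K ≥ 1 be natural numbers, η > 0, η̃ := K·η, let g_{i,k} ∈ E for i ∈ {1,…,N} and k ∈ {0,…,K−1}, and set w' := w − (1/N)·∑_{i=1}^N ∑_{k=0}^{K−1} g_{i,k}. Then F(w') − F(w) ≤ ((3L·η̃ − 1)·η̃/2)·‖∇F(w)‖² + (η̃·(1 + 3L·η̃)/2)·(1/(N·K))·∑_{i=1}^N ∑_{k=0}^{K−1} ‖η^{−1}·g_{i,k} − ∇F(w)‖². -/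
private lemma sq_helper (x a b : ℝ) (hx : 0 ≤ x) (ha : 0 ≤ a) (hb : 0 ≤ b)
    (h : x ≤ a + b) : x^2 ≤ 2*a^2 + 2*b^2 := by
  nlinarith [sq_nonneg (a - b)]

private lemma am_helper (x y c B : ℝ) (hc : 0 < c) (hy : y^2 ≤ c*B) :
    x * y ≤ (c * x^2 + B) / 2 := by
  nlinarith [sq_nonneg (c*x - y), sq_nonneg x, sq_nonneg y]

/-- Per-round descent inequality at the start of the proof of **Theorem 2**
(non-convex case), for full client participation. -/
theorem per_round_descent
    {E : Type*} [NormedAddCommGroup E] [InnerProductSpace ℝ E]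
    (F : E → ℝ) (F' : E → E) (L : ℝ) (hL : 0 < L)
    (hdesc : ∀ x y : E,
      F y ≤ F x + (inner ℝ (F' x) (y - x) : ℝ) + (L / 2) * ‖y - x‖ ^ 2)
    (N K : ℕ) (hN : 1 ≤ N) (hK : 1 ≤ K)
    (η : ℝ) (hη : 0 < η) (ηt : ℝ) (hηt : ηt = (K : ℝ) * η)
    (g : Fin N → Fin K → E) (w w' : E)
    (hw' : w' = w - (1 / (N : ℝ)) • ∑ i, ∑ k, g i k) :
    F w' - F w ≤ ((3 * L * ηt - 1) * ηt / 2) * ‖F' w‖ ^ 2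
      + (ηt * (1 + 3 * L * ηt) / 2) * (1 / ((N : ℝ) * (K : ℝ))) *
          ∑ i, ∑ k, ‖η⁻¹ • g i k - F' w‖ ^ 2 := by
  set v := F' w with hv
  set d : Fin N → Fin K → E := fun i k => η⁻¹ • g i k - v with hd
  set S : E := ∑ i, ∑ k, d i k with hS
  have hNpos : (0:ℝ) < N := by exact_mod_cast Nat.lt_of_lt_of_le Nat.zero_lt_one hN
  have hKpos : (0:ℝ) < K := by exact_mod_cast Nat.lt_of_lt_of_le Nat.zero_lt_one hK
  have hηtpos : 0 < ηt := by rw [hηt]; positivity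
  set μ : ℝ := η / N with hμ
  have hμpos : 0 < μ := by positivity
  -- decomposition
  have hgd : ∀ i k, g i k = η • d i k + η • v := by
    intro i k
    simp [hd, smul_sub, smul_smul, mul_inv_cancel₀ hη.ne']
  have hG : ∑ i, ∑ k, g i k = η • S + ((N:ℝ) * (K:ℝ)) • (η • v) := by
    rw [hS, Finset.smul_sum]
    simp_rw [Finset.smul_sum, hgd, Finset.sum_add_distrib, Finset.sum_const,
      Finset.card_univ, Fintype.card_fin]
    congr 1
    rw [← Nat.cast_smul_eq_nsmul ℝ K (η • v), ← Nat.cast_smul_eq_nsmul ℝ N, smul_smul]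
  have hΔ : (1 / (N:ℝ)) • ∑ i, ∑ k, g i k = μ • S + ηt • v := by
    rw [hG, smul_add, smul_smul, smul_smul, smul_smul]
    congr 1
    · rw [hμ]; ring_nf
    · congr 1
      rw [hηt]
      field_simp
  have hdiff : w' - w = -(μ • S + ηt • v) := by
    rw [hw', ← hΔ]; abel
  -- inner product
  have hinner : (inner ℝ v (w' - w) : ℝ) = -(ηt * ‖v‖^2) - μ * (inner ℝ v S : ℝ) := by
    rw [hdiff, inner_neg_right, inner_add_right, real_inner_smul_right, real_inner_smul_right,
      real_inner_self_eq_norm_sq]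
    ring
  -- norm bound
  have hnorm : ‖w' - w‖ ≤ μ * ‖S‖ + ηt * ‖v‖ := by
    rw [hdiff, norm_neg]
    refine (norm_add_le _ _).trans ?_
    rw [norm_smul, norm_smul, Real.norm_eq_abs, Real.norm_eq_abs,
      abs_of_pos hμpos, abs_of_pos hηtpos]
  set A := ‖v‖^2 with hA
  set B := ∑ i, ∑ k, ‖d i k‖^2 with hB
  set c := (N:ℝ)*(K:ℝ) with hc
  have hcpos : 0 < c := by positivity
  have hB0 : (0:ℝ) ≤ B := by rw [hB]; positivity
  have hμc : μ * c = ηt := by rw [hμ, hc, hηt]; field_simp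
  -- Cauchy-Schwarz on S
  have hSsum : ‖S‖ ≤ ∑ i, ∑ k, ‖d i k‖ :=
    (norm_sum_le _ _).trans (Finset.sum_le_sum fun i _ => norm_sum_le _ _)
  have hsum0 : (0:ℝ) ≤ ∑ i, ∑ k, ‖d i k‖ := by positivity
  have hSsq : ‖S‖^2 ≤ c * B := by
    have h1 : ‖S‖^2 ≤ (∑ i, ∑ k, ‖d i k‖)^2 := by
      nlinarith [norm_nonneg S]
    refine h1.trans ?_
    calc (∑ i, ∑ k, ‖d i k‖)^2 ≤ (N:ℝ) * ∑ i, (∑ k, ‖d i k‖)^2 := by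
          simpa using sq_sum_le_card_mul_sum_sq (s := (Finset.univ : Finset (Fin N)))
            (f := fun i => ∑ k, ‖d i k‖)
      _ ≤ (N:ℝ) * ∑ i, ((K:ℝ) * ∑ k, ‖d i k‖^2) := by
          refine mul_le_mul_of_nonneg_left (Finset.sum_le_sum fun i _ => ?_) hNpos.le
          simpa using sq_sum_le_card_mul_sum_sq (s := (Finset.univ : Finset (Fin K)))
            (f := fun k => ‖d i k‖)
      _ = c * B := by rw [← Finset.mul_sum, hc, hB]; ring
  -- inner v S lower bound
  have hvS : -(inner ℝ v S : ℝ) ≤ ‖v‖ * ‖S‖ := by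
    have h := abs_real_inner_le_norm v S
    cases abs_cases (inner ℝ v S : ℝ) with
    | inl hcase => linarith [real_inner_self_nonneg (x := v)]
    | inr hcase => linarith
  clear_value v d S μ A B c
  have hAM : ‖v‖ * ‖S‖ ≤ (c * A + B) / 2 := by
    rw [hA]
    exact am_helper _ _ _ _ hcpos hSsq
  have h1 : -(μ * (inner ℝ v S : ℝ)) ≤ μ * ((c * A + B) / 2) := by
    have h := mul_le_mul_of_nonneg_left (hvS.trans hAM) hμpos.le
    linarith
  have h2' : μ^2 * ‖S‖^2 ≤ ηt * μ * B := by
    calc μ^2 * ‖S‖^2 ≤ μ^2 * (c * B) :=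
          mul_le_mul_of_nonneg_left hSsq (sq_nonneg μ)
      _ = ηt * μ * B := by rw [← hμc]; ring
  have hnormsq : ‖w' - w‖^2 ≤ 2 * μ^2 * ‖S‖^2 + 2 * ηt^2 * A := by
    have h := sq_helper _ _ _ (norm_nonneg (w' - w))
      (mul_nonneg hμpos.le (norm_nonneg S)) (mul_nonneg hηtpos.le (norm_nonneg v)) hnorm
    have he : 2*(μ*‖S‖)^2 + 2*(ηt*‖v‖)^2 = 2 * μ^2 * ‖S‖^2 + 2 * ηt^2 * A := by
      rw [hA]; ring
    linarith
  -- descent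
  have hdes := hdesc w w'
  rw [← hv, hinner] at hdes
  have hgoal2 : F w' - F w ≤ -(ηt * A) - μ * (inner ℝ v S : ℝ) +
      (L/2) * (2 * μ^2 * ‖S‖^2 + 2 * ηt^2 * A) := by
    have hmul := mul_le_mul_of_nonneg_left hnormsq (by positivity : (0:ℝ) ≤ L/2)
    linarith
  have hL2 : L * (μ^2 * ‖S‖^2) ≤ L * (ηt * μ * B) :=
    mul_le_mul_of_nonneg_left h2' hL.le
  have e1 : F w' - F w ≤ -(ηt * A) + μ * ((c * A + B) / 2) + L * (ηt * μ * B)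
      + L * ηt^2 * A := by
    have he : (L/2) * (2 * μ^2 * ‖S‖^2 + 2 * ηt^2 * A)
        = L * (μ^2 * ‖S‖^2) + L * ηt^2 * A := by ring
    linarith
  have e2 : -(ηt * A) + μ * ((c * A + B) / 2) + L * (ηt * μ * B) + L * ηt^2 * A
      = (L * ηt - 1/2) * ηt * A + μ * (1/2 + L * ηt) * B := by
    rw [← hμc]; ring
  have htarget : ((3 * L * ηt - 1) * ηt / 2) * A + (ηt * (1 + 3 * L * ηt) / 2) * (1/c) * B
      = ((3 * L * ηt - 1) * ηt / 2) * A + (μ * (1 + 3 * L * ηt) / 2) * B := by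
    congr 1
    rw [← hμc]
    field_simp
  have e3 : (L * ηt - 1/2) * ηt * A + μ * (1/2 + L * ηt) * B
      ≤ ((3 * L * ηt - 1) * ηt / 2) * A + (μ * (1 + 3 * L * ηt) / 2) * B := by
    have d1 : (0:ℝ) ≤ L * ηt^2 / 2 * A := by rw [hA]; positivity
    have d2 : (0:ℝ) ≤ μ * L * ηt / 2 * B := mul_nonneg (by positivity) hB0
    have he : ((3 * L * ηt - 1) * ηt / 2) * A + (μ * (1 + 3 * L * ηt) / 2) * B
        - ((L * ηt - 1/2) * ηt * A + μ * (1/2 + L * ηt) * B)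
        = L * ηt^2 / 2 * A + μ * L * ηt / 2 * B := by ring
    linarith
  calc F w' - F w ≤ (L * ηt - 1/2) * ηt * A + μ * (1/2 + L * ηt) * B := by
        rw [← e2]; exact e1
    _ ≤ _ := by rw [htarget]; exact e3
end
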